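/- arXiv:2506.04194 — 9 statements merged into one kernel-verified Lean document; each statement's English description precedes it below -/
import Mathlib

section
/- Theorem 1.1, sufficiency direction (Claim 3.1): If the concept classes (ℙ, 𝔻) satisfy Condition 1, then the average treatment effect is identifiable from the censored density: there exists a function f, defined on functions ℝ^d × ℝ × {0,1} → [0,∞) and taking values in ℝ, such that f(C_D) = τ_D for every density-form observational study D that is realizable with respect to (ℙ, 𝔻). -/
open MeasureTheory MvPolynomial

noncomputable section

/-- A point of the sample space: a covariate in `ℝ^d` together with an outcome in `ℝ`. -/
abbrev Pt (d : ℕ) := (Fin d → ℝ) × ℝ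

/-- A censored sample: covariate, observed outcome, and treatment bit. -/
abbrev Samp (d : ℕ) := (Fin d → ℝ) × ℝ × Bool

/-- A generalized propensity score: a measurable function into `[0,1]`. -/
def IsPropensity {d : ℕ} (p : Pt d → ℝ) : Prop :=
  Measurable p ∧ ∀ z, p z ∈ Set.Icc (0 : ℝ) 1

/-- A (Lebesgue) probability density on `ℝ^d × ℝ` with finite outcome mean. -/
def IsDensity {d : ℕ} (P : Pt d → ℝ) : Prop :=
  Measurable P ∧ (∀ z, 0 ≤ P z) ∧ Integrable P ∧ (∫ z, P z = 1) ∧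
    Integrable fun z : Pt d => |z.2| * P z

/-- The `X`-marginal of a density. -/
def margX {d : ℕ} (P : Pt d → ℝ) (x : Fin d → ℝ) : ℝ := ∫ y, P (x, y)

/-- A density-form observational study `(p₀, p₁, 𝒫₀, 𝒫₁)`. -/
def ValidStudy {d : ℕ} (p₀ p₁ P₀ P₁ : Pt d → ℝ) : Prop :=
  IsPropensity p₀ ∧ IsPropensity p₁ ∧ IsDensity P₀ ∧ IsDensity P₁ ∧
    (∀ x, margX P₀ x = margX P₁ x) ∧
    (∀ x, (∫ y, p₀ (x, y) * P₀ (x, y)) + (∫ y, p₁ (x, y) * P₁ (x, y)) = margX P₀ x)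

/-- The censored density `C_D (x, y, t) = p_t(x,y) ⬝ 𝒫_t(x,y)`. -/
def censoredDensity {d : ℕ} (p₀ p₁ P₀ P₁ : Pt d → ℝ) : Samp d → ℝ :=
  fun z => if z.2.2 then p₁ (z.1, z.2.1) * P₁ (z.1, z.2.1)
           else p₀ (z.1, z.2.1) * P₀ (z.1, z.2.1)

/-- Mean outcome `∬ y ⬝ 𝒫(x,y) dy dx` of a density. -/
def outMean {d : ℕ} (P : Pt d → ℝ) : ℝ := ∫ z : Pt d, z.2 * P z

/-- The average treatment effect of a study. -/
def ate {d : ℕ} (P₀ P₁ : Pt d → ℝ) : ℝ := outMean P₁ - outMean P₀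

/-- `Pr_D[T = 1]`. -/
def prT1 {d : ℕ} (p₁ P₁ : Pt d → ℝ) : ℝ := ∫ z, p₁ z * P₁ z

/-- The average treatment effect on the treated. -/
def att {d : ℕ} (p₀ p₁ P₀ P₁ : Pt d → ℝ) : ℝ :=
  ((∫ z : Pt d, z.2 * (p₁ z * P₁ z)) - outMean P₀ + ∫ z : Pt d, z.2 * (p₀ z * P₀ z)) /
    prT1 p₁ P₁

/-- Realizability of a study with respect to concept classes `(ℙ, 𝔻)`. -/
def Realizable {d : ℕ} (PP DD : Set (Pt d → ℝ)) (p₀ p₁ P₀ P₁ : Pt d → ℝ) : Prop :=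
  ValidStudy p₀ p₁ P₀ P₁ ∧ p₀ ∈ PP ∧ p₁ ∈ PP ∧ P₀ ∈ DD ∧ P₁ ∈ DD

/-- Compatibility of a tuple `(p, 𝒫)` with `(ℙ, 𝔻)`. -/
def Compatible {d : ℕ} (PP DD : Set (Pt d → ℝ)) (p P : Pt d → ℝ) : Prop :=
  p ∈ PP ∧ P ∈ DD ∧ ∃ p' ∈ PP, ∃ P' ∈ DD, ValidStudy p p' P P'

/-- Condition 1 (the identifiability condition). -/
def Condition1 {d : ℕ} (PP DD : Set (Pt d → ℝ)) : Prop :=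
  ∀ p P q Q : Pt d → ℝ, Compatible PP DD p P → Compatible PP DD q Q →
    outMean P = outMean Q ∨ margX P ≠ margX Q ∨
      ∃ x y, 0 < margX P x ∧ p (x, y) * P (x, y) ≠ q (x, y) * Q (x, y)

/-- The class `ℙ_OU(c)`: unconfoundedness plus `c`-overlap. -/
def POU {d : ℕ} (c : ℝ) : Set (Pt d → ℝ) :=
  {p | Measurable p ∧ (∀ x y₁ y₂, p (x, y₁) = p (x, y₂)) ∧ ∀ z, c < p z ∧ p z < 1 - c}

/-- The class `𝔻_all` of all densities with finite outcome means. -/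
def Dall (d : ℕ) : Set (Pt d → ℝ) := {P | IsDensity P}

/-- The class `ℙ_O(c)`: `c`-overlap. -/
def PO {d : ℕ} (c : ℝ) : Set (Pt d → ℝ) :=
  {p | Measurable p ∧ ∀ z, c < p z ∧ p z < 1 - c}

/-- Condition 2 with constant `c`. -/
def Condition2 {d : ℕ} (c : ℝ) (DD : Set (Pt d → ℝ)) : Prop :=
  ∀ P ∈ DD, ∀ Q ∈ DD, outMean P ≠ outMean Q →
    margX P ≠ margX Q ∨
      ∃ x y, 0 < margX P x ∧
        ((0 < P (x, y) ∧ (1 - c) * Q (x, y) ≤ c * P (x, y)) ∨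
         (0 < Q (x, y) ∧ (1 - c) * P (x, y) ≤ c * Q (x, y)))

/-- The class `ℙ_U(c)`: unconfoundedness plus `c`-weak-overlap. -/
def PU {d : ℕ} (c : ℝ) : Set (Pt d → ℝ) :=
  {p | Measurable p ∧ (∀ z, p z ∈ Set.Icc (0 : ℝ) 1) ∧
       (∀ x y₁ y₂, p (x, y₁) = p (x, y₂)) ∧
       ∃ S : Set (Fin d → ℝ), MeasurableSet S ∧ ENNReal.ofReal c ≤ volume S ∧
         ∀ x ∈ S, ∀ y, c < p (x, y)}

/-- Condition 3 with constant `c`. -/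
def Condition3 {d : ℕ} (c : ℝ) (DD : Set (Pt d → ℝ)) : Prop :=
  ∀ P ∈ DD, ∀ Q ∈ DD, outMean P ≠ outMean Q →
    margX P ≠ margX Q ∨
      ¬ ∃ S : Set (Fin d → ℝ), MeasurableSet S ∧ ENNReal.ofReal c ≤ volume S ∧
          ∀ x ∈ S, ∀ y, P (x, y) = Q (x, y)

/-- `c`-RD-design. -/
def IsRDDesign {d : ℕ} (c : ℝ) (p₀ p₁ P₀ P₁ : Pt d → ℝ) : Prop :=
  ValidStudy p₀ p₁ P₀ P₁ ∧
    ∃ S : Set (Fin d → ℝ), MeasurableSet S ∧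
      ENNReal.ofReal c < volume S ∧ ENNReal.ofReal c < volume Sᶜ ∧
      (∀ x y, p₀ (x, y) = Set.indicator Sᶜ (fun _ => (1 : ℝ)) x) ∧
      (∀ x y, p₁ (x, y) = Set.indicator S (fun _ => (1 : ℝ)) x)

/-- Total variation distance between densities. -/
def dTV {d : ℕ} (f g : Pt d → ℝ) : ℝ := (1 / 2) * ∫ z, |f z - g z|

/-- The truncation of a density `P` to `S × ℝ`. -/
def truncDens {d : ℕ} (P : Pt d → ℝ) (S : Set (Fin d → ℝ)) : Pt d → ℝ :=
  fun z => Set.indicator (S ×ˢ (Set.univ : Set ℝ)) P z / ∫ w in S ×ˢ (Set.univ : Set ℝ), P w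

/-- Condition 5 with constants `c, C`. -/
def Condition5 {d : ℕ} (c C : ℝ) (DD : Set (Pt d → ℝ)) : Prop :=
  ∀ P ∈ DD, ∀ Q ∈ DD, ∀ S : Set (Fin d → ℝ), MeasurableSet S →
    ENNReal.ofReal c < volume S →
    0 < ∫ z in S ×ˢ (Set.univ : Set ℝ), P z →
    0 < ∫ z in S ×ˢ (Set.univ : Set ℝ), Q z →
    ∀ ε : ℝ, 0 < ε → dTV (truncDens P S) (truncDens Q S) ≤ ε →
      |outMean P - outMean Q| ≤ ε * C

/-- Condition 6 (the identifiability condition for HTE). -/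
def Condition6 {d : ℕ} (PP DD : Set (Pt d → ℝ)) : Prop :=
  ∀ p P q Q : Pt d → ℝ, Compatible PP DD p P → Compatible PP DD q Q →
    (p, P) ≠ (q, Q) →
    P = Q ∨ margX P ≠ margX Q ∨
      ∃ x y, 0 < margX P x ∧ p (x, y) * P (x, y) ≠ q (x, y) * Q (x, y)

/-- A finite set `s` is `γ`-shattered by the class `H`. -/
def FatShattered {Z : Type*} (H : Set (Z → ℝ)) (γ : ℝ) (s : Finset Z) : Prop :=
  ∃ t : Z → ℝ, ∀ b : Z → Bool, ∃ h ∈ H, ∀ z ∈ s,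
    if b z then γ ≤ h z - t z else γ ≤ t z - h z

/-- The fat-shattering dimension at scale `γ`. -/
def fatDim {Z : Type*} (H : Set (Z → ℝ)) (γ : ℝ) : ℕ∞ :=
  ⨆ s ∈ {s : Finset Z | FatShattered H γ s}, (s.card : ℕ∞)

/-- The censored distribution: the measure on samples whose density w.r.t.
(Lebesgue × Lebesgue × counting) is the censored density. -/
def censMeasure {d : ℕ} (p₀ p₁ P₀ P₁ : Pt d → ℝ) : Measure (Samp d) :=
  ((volume : Measure (Fin d → ℝ)).prod
      ((volume : Measure ℝ).prod (Measure.count : Measure Bool))).withDensity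
    fun z => ENNReal.ofReal (censoredDensity p₀ p₁ P₀ P₁ z)

/-- A probability density (no finite-mean requirement). -/
def IsProbDensity {d : ℕ} (P : Pt d → ℝ) : Prop :=
  Measurable P ∧ (∀ z, 0 ≤ P z) ∧ Integrable P ∧ ∫ z, P z = 1

/-- `Cov` is a total-variation `ε`-cover of `DD` by probability densities. -/
def IsTVCover {d : ℕ} (DD : Set (Pt d → ℝ)) (ε : ℝ) (Cov : Finset (Pt d → ℝ)) : Prop :=
  (∀ g ∈ Cov, IsProbDensity g) ∧ ∀ P ∈ DD, ∃ g ∈ Cov, dTV P g ≤ ε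

/-- Condition 4 with constant `c` and mass function `M`. -/
def Condition4 {d : ℕ} (c : ℝ) (M : ℝ → ℝ) (DD : Set (Pt d → ℝ)) : Prop :=
  ∀ ε : ℝ, 0 < ε → ∀ P ∈ DD, ∀ Q ∈ DD, ε < |outMean P - outMean Q| →
    ∃ S : Set (Pt d), MeasurableSet S ∧
      M ε / c ≤ ∫ z in S, P z ∧ M ε / c ≤ ∫ z in S, Q z ∧
      ∀ z ∈ S, (0 < P z ∧ 2 * (1 - c) * Q z ≤ c * P z) ∨
               (0 < Q z ∧ 2 * (1 - c) * P z ≤ c * Q z)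

/-- The unit cube `[0,1]^d` of covariates. -/
def unitCube (d : ℕ) : Set (Fin d → ℝ) := Set.univ.pi fun _ => Set.Icc (0 : ℝ) 1

/-- The unit cube `K = [0,1]^{d+1}` of covariate-outcome pairs. -/
def Kcube (d : ℕ) : Set (Pt d) := unitCube d ×ˢ Set.Icc (0 : ℝ) 1

end

/-- Swapped validity. -/
lemma validStudy_swap {d : ℕ} {p₀ p₁ P₀ P₁ : Pt d → ℝ}
    (h : ValidStudy p₀ p₁ P₀ P₁) : ValidStudy p₁ p₀ P₁ P₀ := by
  obtain ⟨h₀, h₁, hP₀, hP₁, hm, hc⟩ := h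
  refine ⟨h₁, h₀, hP₁, hP₀, fun x => (hm x).symm, fun x => ?_⟩
  rw [← hm x, ← hc x]; ring

lemma key_ate_eq {d : ℕ} {PP DD : Set (Pt d → ℝ)} (hcond : Condition1 PP DD)
    {p₀ p₁ P₀ P₁ q₀ q₁ Q₀ Q₁ : Pt d → ℝ}
    (hR : Realizable PP DD p₀ p₁ P₀ P₁) (hR' : Realizable PP DD q₀ q₁ Q₀ Q₁)
    (hC : censoredDensity p₀ p₁ P₀ P₁ = censoredDensity q₀ q₁ Q₀ Q₁) :
    ate P₀ P₁ = ate Q₀ Q₁ := by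
  obtain ⟨hV, hp₀, hp₁, hP₀, hP₁⟩ := hR
  obtain ⟨hV', hq₀, hq₁, hQ₀, hQ₁⟩ := hR'
  have h0 : ∀ x y, p₀ (x, y) * P₀ (x, y) = q₀ (x, y) * Q₀ (x, y) := by
    intro x y
    have := congrFun hC (x, y, false)
    simpa [censoredDensity] using this
  have h1 : ∀ x y, p₁ (x, y) * P₁ (x, y) = q₁ (x, y) * Q₁ (x, y) := by
    intro x y
    have := congrFun hC (x, y, true)
    simpa [censoredDensity] using this
  -- marginals agree
  have hm0 : margX P₀ = margX Q₀ := by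
    funext x
    have e1 := hV.2.2.2.2.2 x
    have e2 := hV'.2.2.2.2.2 x
    rw [← e1, ← e2]
    congr 1
    · exact integral_congr_ae (Filter.Eventually.of_forall fun y => h0 x y)
    · exact integral_congr_ae (Filter.Eventually.of_forall fun y => h1 x y)
  have hm1 : margX P₁ = margX Q₁ := by
    funext x
    rw [← hV.2.2.2.2.1 x, ← hV'.2.2.2.2.1 x, hm0]
  -- compatibility
  have comp0 : Compatible PP DD p₀ P₀ := ⟨hp₀, hP₀, p₁, hp₁, P₁, hP₁, hV⟩
  have comp0' : Compatible PP DD q₀ Q₀ := ⟨hq₀, hQ₀, q₁, hq₁, Q₁, hQ₁, hV'⟩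
  have comp1 : Compatible PP DD p₁ P₁ := ⟨hp₁, hP₁, p₀, hp₀, P₀, hP₀, validStudy_swap hV⟩
  have comp1' : Compatible PP DD q₁ Q₁ := ⟨hq₁, hQ₁, q₀, hq₀, Q₀, hQ₀, validStudy_swap hV'⟩
  have hout0 : outMean P₀ = outMean Q₀ := by
    rcases hcond p₀ P₀ q₀ Q₀ comp0 comp0' with h | h | ⟨x, y, _, hne⟩
    · exact h
    · exact absurd hm0 h
    · exact absurd (h0 x y) hne
  have hout1 : outMean P₁ = outMean Q₁ := by
    rcases hcond p₁ P₁ q₁ Q₁ comp1 comp1' with h | h | ⟨x, y, _, hne⟩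
    · exact h
    · exact absurd hm1 h
    · exact absurd (h1 x y) hne
  simp [ate, hout0, hout1]

/-- Theorem 1.1 (sufficiency): if `(ℙ, 𝔻)` satisfy Condition 1, then the ATE is
identifiable from the censored density. -/
theorem condition1_sufficient_for_ate_identification
    (d : ℕ) (hd : 1 ≤ d) (PP DD : Set (Pt d → ℝ))
    (hPP : ∀ p ∈ PP, IsPropensity p) (hDD : ∀ P ∈ DD, IsDensity P)
    (hcond : Condition1 PP DD) :
    ∃ f : (Samp d → ℝ) → ℝ,
      ∀ p₀ p₁ P₀ P₁ : Pt d → ℝ, Realizable PP DD p₀ p₁ P₀ P₁ →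
        f (censoredDensity p₀ p₁ P₀ P₁) = ate P₀ P₁ := by
  classical
  refine ⟨fun C =>
    if h : ∃ s : (Pt d → ℝ) × (Pt d → ℝ) × (Pt d → ℝ) × (Pt d → ℝ),
        Realizable PP DD s.1 s.2.1 s.2.2.1 s.2.2.2 ∧
        censoredDensity s.1 s.2.1 s.2.2.1 s.2.2.2 = C
    then ate h.choose.2.2.1 h.choose.2.2.2
    else 0, ?_⟩
  intro p₀ p₁ P₀ P₁ hR
  have h : ∃ s : (Pt d → ℝ) × (Pt d → ℝ) × (Pt d → ℝ) × (Pt d → ℝ),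
      Realizable PP DD s.1 s.2.1 s.2.2.1 s.2.2.2 ∧
      censoredDensity s.1 s.2.1 s.2.2.1 s.2.2.2 = censoredDensity p₀ p₁ P₀ P₁ :=
    ⟨(p₀, p₁, P₀, P₁), hR, rfl⟩
  dsimp only
  rw [dif_pos h]
  obtain ⟨hR', hC'⟩ := h.choose_spec
  exact key_ate_eq hcond hR' hR hC'
end

section
/- Theorem 1.2, sufficiency direction: If the concept classes (ℙ, 𝔻) satisfy Condition 1, then the average treatment effect on the treated is identifiable from the censored density: there exists a function f, defined on functions ℝ^d × ℝ × {0,1} → [0,∞) and taking values in ℝ, such that f(C_D) = γ_D for every density-form observational study D realizable with respect to (ℙ, 𝔻) that satisfies Pr_D[T=1] > 0. -/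
open MeasureTheory MvPolynomial

/-- Key lemma: if two realizable studies have the same censored density, they have the
same ATT. -/
theorem att_eq_of_censored_eq
    (d : ℕ) (PP DD : Set (Pt d → ℝ)) (hcond : Condition1 PP DD)
    (p₀ p₁ P₀ P₁ q₀ q₁ Q₀ Q₁ : Pt d → ℝ)
    (hR : Realizable PP DD p₀ p₁ P₀ P₁) (hR' : Realizable PP DD q₀ q₁ Q₀ Q₁)
    (hC : censoredDensity p₀ p₁ P₀ P₁ = censoredDensity q₀ q₁ Q₀ Q₁) :
    att p₀ p₁ P₀ P₁ = att q₀ q₁ Q₀ Q₁ := by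
  obtain ⟨hV, hp₀, hp₁, hP₀, hP₁⟩ := hR
  obtain ⟨hV', hq₀, hq₁, hQ₀, hQ₁⟩ := hR'
  have h1 : ∀ x y, p₁ (x, y) * P₁ (x, y) = q₁ (x, y) * Q₁ (x, y) := by
    intro x y
    have := congrFun hC (x, y, true)
    simpa [censoredDensity] using this
  have h0 : ∀ x y, p₀ (x, y) * P₀ (x, y) = q₀ (x, y) * Q₀ (x, y) := by
    intro x y
    have := congrFun hC (x, y, false)
    simpa [censoredDensity] using this
  have hmarg : margX P₀ = margX Q₀ := by
    funext x
    have e1 := hV.2.2.2.2.2 x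
    have e2 := hV'.2.2.2.2.2 x
    rw [← e1, ← e2]
    congr 1
    · exact integral_congr_ae (Filter.Eventually.of_forall fun y => h0 x y)
    · exact integral_congr_ae (Filter.Eventually.of_forall fun y => h1 x y)
  have hout : outMean P₀ = outMean Q₀ := by
    rcases hcond p₀ P₀ q₀ Q₀ ⟨hp₀, hP₀, p₁, hp₁, P₁, hP₁, hV⟩
        ⟨hq₀, hQ₀, q₁, hq₁, Q₁, hQ₁, hV'⟩ with h | h | ⟨x, y, _, hne⟩
    · exact h
    · exact absurd hmarg h
    · exact absurd (h0 x y) hne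
  have hf1 : (fun z : Pt d => p₁ z * P₁ z) = fun z => q₁ z * Q₁ z := by
    funext z; exact h1 z.1 z.2
  have hf0 : (fun z : Pt d => p₀ z * P₀ z) = fun z => q₀ z * Q₀ z := by
    funext z; exact h0 z.1 z.2
  unfold att prT1
  rw [hout]
  congr 1
  · congr 1
    · congr 1
      exact integral_congr_ae (Filter.Eventually.of_forall fun z =>
        by dsimp only; rw [h1 z.1 z.2])
    · exact integral_congr_ae (Filter.Eventually.of_forall fun z =>
        by dsimp only; rw [h0 z.1 z.2])
  · exact integral_congr_ae (Filter.Eventually.of_forall fun z => h1 z.1 z.2)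

/-- Theorem 1.2 (sufficiency): if `(ℙ, 𝔻)` satisfy Condition 1, then the ATT is
identifiable from the censored density on realizable studies with `Pr[T=1] > 0`. -/
theorem condition1_sufficient_for_att_identification
    (d : ℕ) (hd : 1 ≤ d) (PP DD : Set (Pt d → ℝ))
    (hPP : ∀ p ∈ PP, IsPropensity p) (hDD : ∀ P ∈ DD, IsDensity P)
    (hcond : Condition1 PP DD) :
    ∃ f : (Samp d → ℝ) → ℝ,
      ∀ p₀ p₁ P₀ P₁ : Pt d → ℝ, Realizable PP DD p₀ p₁ P₀ P₁ →
        0 < prT1 p₁ P₁ →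
        f (censoredDensity p₀ p₁ P₀ P₁) = att p₀ p₁ P₀ P₁ := by
  classical
  refine ⟨fun C =>
    if h : ∃ t : (Pt d → ℝ) × (Pt d → ℝ) × (Pt d → ℝ) × (Pt d → ℝ),
        Realizable PP DD t.1 t.2.1 t.2.2.1 t.2.2.2 ∧
          censoredDensity t.1 t.2.1 t.2.2.1 t.2.2.2 = C
    then att h.choose.1 h.choose.2.1 h.choose.2.2.1 h.choose.2.2.2 else 0,
    fun p₀ p₁ P₀ P₁ hR _ => ?_⟩
  have h : ∃ t : (Pt d → ℝ) × (Pt d → ℝ) × (Pt d → ℝ) × (Pt d → ℝ),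
      Realizable PP DD t.1 t.2.1 t.2.2.1 t.2.2.2 ∧
        censoredDensity t.1 t.2.1 t.2.2.1 t.2.2.2 = censoredDensity p₀ p₁ P₀ P₁ :=
    ⟨⟨p₀, p₁, P₀, P₁⟩, hR, rfl⟩
  dsimp only
  rw [dif_pos h]
  exact att_eq_of_censored_eq d PP DD hcond _ _ _ _ _ _ _ _
    h.choose_spec.1 hR h.choose_spec.2
end

section
/- Theorem 4.1 (Identification in Scenario I): For every c ∈ (0,1/2), the pair of concept classes (ℙ_OU(c), 𝔻_all) satisfies Condition 1. -/
open MeasureTheory MvPolynomial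

/-- Theorem 4.1 (Identification in Scenario I): for every `c ∈ (0, 1/2)`,
`(ℙ_OU(c), 𝔻_all)` satisfies Condition 1. -/
theorem scenarioI_satisfies_condition1
    (d : ℕ) (hd : 1 ≤ d) (c : ℝ) (hc : c ∈ Set.Ioo (0 : ℝ) (1 / 2)) :
    Condition1 (POU (d := d) c) (Dall d) := by
  rintro p P q Q ⟨hp, hP, -⟩ ⟨hq, hQ, -⟩
  by_cases hM : margX P = margX Q
  swap
  · exact Or.inr (Or.inl hM)
  by_cases h3 : ∃ x y, 0 < margX P x ∧ p (x, y) * P (x, y) ≠ q (x, y) * Q (x, y)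
  · exact Or.inr (Or.inr h3)
  left
  push_neg at h3
  obtain ⟨hpm, hpc, hpb⟩ := hp
  obtain ⟨hqm, hqc, hqb⟩ := hq
  obtain ⟨hPm, hPnn, hPint, hPone, hPmean⟩ := hP
  obtain ⟨hQm, hQnn, hQint, hQone, hQmean⟩ := hQ
  have key : ∀ x, 0 < margX P x → ∀ y, P (x, y) = Q (x, y) := by
    intro x hx y
    have h1 : ∀ y, p (x, 0) * P (x, y) = q (x, 0) * Q (x, y) := by
      intro y
      rw [hpc x 0 y, hqc x 0 y]
      exact h3 x y hx
    have h2 : p (x, 0) * margX P x = q (x, 0) * margX Q x := by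
      have h2' := integral_congr_ae (μ := (volume : Measure ℝ))
        (Filter.Eventually.of_forall h1)
      simpa [margX, integral_const_mul] using h2'
    rw [show margX Q x = margX P x from (congrFun hM x).symm] at h2
    have hpq : p (x, 0) = q (x, 0) := mul_right_cancel₀ hx.ne' h2
    have hq0 : q (x, 0) ≠ 0 := ne_of_gt (lt_trans hc.1 (hqb (x, 0)).1)
    have h1y := h1 y
    rw [hpq] at h1y
    exact mul_left_cancel₀ hq0 h1y
  have hintP : Integrable (fun z : Pt d => z.2 * P z) := by
    refine hPmean.mono' ((measurable_snd.mul hPm).aestronglyMeasurable) ?_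
    filter_upwards with z
    rw [Real.norm_eq_abs, abs_mul, abs_of_nonneg (hPnn z)]
  have hintQ : Integrable (fun z : Pt d => z.2 * Q z) := by
    refine hQmean.mono' ((measurable_snd.mul hQm).aestronglyMeasurable) ?_
    filter_upwards with z
    rw [Real.norm_eq_abs, abs_mul, abs_of_nonneg (hQnn z)]
  have hintP' : Integrable (fun z : Pt d => z.2 * P z)
      ((volume : Measure (Fin d → ℝ)).prod volume) := hintP
  have hintQ' : Integrable (fun z : Pt d => z.2 * Q z)
      ((volume : Measure (Fin d → ℝ)).prod volume) := hintQ
  have hPint' : Integrable P ((volume : Measure (Fin d → ℝ)).prod volume) := hPint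
  have hQint' : Integrable Q ((volume : Measure (Fin d → ℝ)).prod volume) := hQint
  have hFP : outMean P = ∫ x, ∫ y, y * P (x, y) := by
    rw [outMean, Measure.volume_eq_prod]
    exact MeasureTheory.integral_prod _ hintP'
  have hFQ : outMean Q = ∫ x, ∫ y, y * Q (x, y) := by
    rw [outMean, Measure.volume_eq_prod]
    exact MeasureTheory.integral_prod _ hintQ'
  rw [hFP, hFQ]
  refine integral_congr_ae ?_
  filter_upwards [hPint'.prod_right_ae, hQint'.prod_right_ae] with x hPx hQx
  by_cases hx : 0 < margX P x
  · exact integral_congr_ae (Filter.Eventually.of_forall fun y => by show y * P (x, y) = y * Q (x, y); rw [key x hx y])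
  · have hx0 : margX P x = 0 :=
      le_antisymm (not_lt.mp hx) (integral_nonneg fun y => hPnn (x, y))
    have hP0 : (fun y => P (x, y)) =ᵐ[volume] 0 :=
      (integral_eq_zero_iff_of_nonneg (fun y => hPnn (x, y)) hPx).mp hx0
    have hx0' : margX Q x = 0 := by rw [← congrFun hM x]; exact hx0
    have hQ0 : (fun y => Q (x, y)) =ᵐ[volume] 0 :=
      (integral_eq_zero_iff_of_nonneg (fun y => hQnn (x, y)) hQx).mp hx0'
    have e1 : ∫ y, y * P (x, y) = 0 := by
      refine integral_eq_zero_of_ae (hP0.mono fun y hy => ?_)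
      simp only [Pi.zero_apply] at hy ⊢
      rw [hy, mul_zero]
    have e2 : ∫ y, y * Q (x, y) = 0 := by
      refine integral_eq_zero_of_ae (hQ0.mono fun y hy => ?_)
      simp only [Pi.zero_apply] at hy ⊢
      rw [hy, mul_zero]
    rw [e1, e2]
end

section
/- Theorem 4.3, sufficiency direction (Scenario II): Fix c ∈ (0,1/2). If the class 𝔻 satisfies Condition 2 with constant c, then there exists a function f, defined on functions ℝ^d × ℝ × {0,1} → [0,∞) and taking values in ℝ, such that f(C_D) = τ_D for every density-form observational study D realizable with respect to (ℙ_O(c), 𝔻). -/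
open MeasureTheory MvPolynomial

/-- Theorem 4.3 (sufficiency, Scenario II): if `𝔻` satisfies Condition 2 with constant `c`,
then the ATE is identifiable on studies realizable with respect to `(ℙ_O(c), 𝔻)`. -/
theorem condition2_sufficient_for_ate_identification
    (d : ℕ) (hd : 1 ≤ d) (c : ℝ) (hc : c ∈ Set.Ioo (0 : ℝ) (1 / 2))
    (DD : Set (Pt d → ℝ)) (hDD : ∀ P ∈ DD, IsDensity P)
    (hcond : Condition2 c DD) :
    ∃ f : (Samp d → ℝ) → ℝ,
      ∀ p₀ p₁ P₀ P₁ : Pt d → ℝ, Realizable (PO c) DD p₀ p₁ P₀ P₁ →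
        f (censoredDensity p₀ p₁ P₀ P₁) = ate P₀ P₁ := by
  classical
  obtain ⟨hc0, hc2⟩ := hc
  -- key uniqueness lemma
  have hout : ∀ p q P Q : Pt d → ℝ, p ∈ PO (d := d) c → q ∈ PO (d := d) c →
      P ∈ DD → Q ∈ DD → (∀ z : Pt d, p z * P z = q z * Q z) →
      margX P = margX Q → outMean P = outMean Q := by
    intro p q P Q hp hq hP hQ heq hm
    by_contra hne
    rcases hcond P hP Q hQ hne with hm' | ⟨x, y, hx, hcase⟩
    · exact hm' hm
    · have hpz := hp.2 (x, y)
      have hqz := hq.2 (x, y)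
      have hPz : 0 ≤ P (x, y) := (hDD P hP).2.1 (x, y)
      have hQz : 0 ≤ Q (x, y) := (hDD Q hQ).2.1 (x, y)
      have heqz := heq (x, y)
      rcases hcase with ⟨hpos, hle⟩ | ⟨hpos, hle⟩
      · nlinarith [mul_lt_mul_of_pos_right hpz.1 hpos,
          mul_le_mul_of_nonneg_right hqz.2.le hQz]
      · nlinarith [mul_lt_mul_of_pos_right hqz.1 hpos,
          mul_le_mul_of_nonneg_right hpz.2.le hPz]
  have key : ∀ p₀ p₁ P₀ P₁ q₀ q₁ Q₀ Q₁ : Pt d → ℝ,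
      Realizable (PO c) DD p₀ p₁ P₀ P₁ → Realizable (PO c) DD q₀ q₁ Q₀ Q₁ →
      censoredDensity p₀ p₁ P₀ P₁ = censoredDensity q₀ q₁ Q₀ Q₁ →
      ate P₀ P₁ = ate Q₀ Q₁ := by
    intro p₀ p₁ P₀ P₁ q₀ q₁ Q₀ Q₁ h1 h2 hC
    obtain ⟨⟨hp₀, hp₁, hP₀, hP₁, hmm, hval⟩, hp₀P, hp₁P, hP₀D, hP₁D⟩ := h1
    obtain ⟨⟨hq₀, hq₁, hQ₀, hQ₁, hmm', hval'⟩, hq₀P, hq₁P, hQ₀D, hQ₁D⟩ := h2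
    have h0 : ∀ x y, p₀ (x, y) * P₀ (x, y) = q₀ (x, y) * Q₀ (x, y) := fun x y => by
      simpa [censoredDensity] using congrFun hC (x, y, false)
    have h1' : ∀ x y, p₁ (x, y) * P₁ (x, y) = q₁ (x, y) * Q₁ (x, y) := fun x y => by
      simpa [censoredDensity] using congrFun hC (x, y, true)
    have hm0 : margX P₀ = margX Q₀ := by
      funext x
      have e0 : (fun y => p₀ (x, y) * P₀ (x, y)) = fun y => q₀ (x, y) * Q₀ (x, y) :=
        funext (h0 x)
      have e1 : (fun y => p₁ (x, y) * P₁ (x, y)) = fun y => q₁ (x, y) * Q₁ (x, y) :=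
        funext (h1' x)
      rw [← hval x, ← hval' x]
      simp only [e0, e1]
    have hm1 : margX P₁ = margX Q₁ := by
      funext x
      rw [← hmm x, ← hmm' x, congrFun hm0 x]
    have ho0 : outMean P₀ = outMean Q₀ :=
      hout p₀ q₀ P₀ Q₀ hp₀P hq₀P hP₀D hQ₀D (fun z => h0 z.1 z.2) hm0
    have ho1 : outMean P₁ = outMean Q₁ :=
      hout p₁ q₁ P₁ Q₁ hp₁P hq₁P hP₁D hQ₁D (fun z => h1' z.1 z.2) hm1
    simp [ate, ho0, ho1]
  refine ⟨fun C =>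
    if h : ∃ t : (Pt d → ℝ) × (Pt d → ℝ) × (Pt d → ℝ) × (Pt d → ℝ),
        Realizable (PO c) DD t.1 t.2.1 t.2.2.1 t.2.2.2 ∧
          censoredDensity t.1 t.2.1 t.2.2.1 t.2.2.2 = C
    then ate h.choose.2.2.1 h.choose.2.2.2 else 0, ?_⟩
  intro p₀ p₁ P₀ P₁ hreal
  have hex : ∃ t : (Pt d → ℝ) × (Pt d → ℝ) × (Pt d → ℝ) × (Pt d → ℝ),
      Realizable (PO c) DD t.1 t.2.1 t.2.2.1 t.2.2.2 ∧
        censoredDensity t.1 t.2.1 t.2.2.1 t.2.2.2 = censoredDensity p₀ p₁ P₀ P₁ :=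
    ⟨(p₀, p₁, P₀, P₁), hreal, rfl⟩
  exact (dif_pos hex).trans
    (key _ _ _ _ _ _ _ _ hex.choose_spec.1 hreal hex.choose_spec.2)
end

section
/- Theorem 4.5, sufficiency direction (Scenario III): Fix c ∈ (0,1/2) and a class 𝔻 such that 𝒫_X(x) > 0 for every 𝒫 ∈ 𝔻 and every x ∈ ℝ^d. If 𝔻 satisfies Condition 3 with constant c, then there exists a function f, defined on functions ℝ^d × ℝ × {0,1} → [0,∞) and taking values in ℝ, such that f(C_D) = τ_D for every density-form observational study D realizable with respect to (ℙ_U(c), 𝔻). -/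
open MeasureTheory MvPolynomial

private lemma dens_eq_on (d : ℕ) (c : ℝ) (hc0 : 0 < c)
    (p q P Q : Pt d → ℝ)
    (hpU : p ∈ PU c)
    (hq : ∀ x y₁ y₂, q (x, y₁) = q (x, y₂))
    (h : ∀ x y, p (x, y) * P (x, y) = q (x, y) * Q (x, y))
    (hm : ∀ x, margX P x = margX Q x)
    (hmpos : ∀ x, 0 < margX P x) :
    ∃ S : Set (Fin d → ℝ), MeasurableSet S ∧ ENNReal.ofReal c ≤ volume S ∧
      ∀ x ∈ S, ∀ y, P (x, y) = Q (x, y) := by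
  obtain ⟨-, -, hpu, S, Sm, Sv, hS⟩ := hpU
  have hpq : ∀ x, p (x, 0) = q (x, 0) := by
    intro x
    have e1 : ∫ y, p (x, y) * P (x, y) = p (x, 0) * margX P x := by
      have h' : ∀ y : ℝ, p (x, y) * P (x, y) = p (x, 0) * P (x, y) := fun y => by
        rw [hpu x y 0]
      simp only [h', margX]
      exact integral_const_mul _ _
    have e2 : ∫ y, q (x, y) * Q (x, y) = q (x, 0) * margX Q x := by
      have h' : ∀ y : ℝ, q (x, y) * Q (x, y) = q (x, 0) * Q (x, y) := fun y => by
        rw [hq x y 0]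
      simp only [h', margX]
      exact integral_const_mul _ _
    have e3 : p (x, 0) * margX Q x = q (x, 0) * margX Q x := by
      calc p (x, 0) * margX Q x = ∫ y, p (x, y) * P (x, y) := by rw [← hm x, e1]
        _ = ∫ y, q (x, y) * Q (x, y) := by simp only [h]
        _ = q (x, 0) * margX Q x := e2
    have hQpos : (0 : ℝ) < margX Q x := lt_of_lt_of_eq (hmpos x) (hm x)
    exact mul_right_cancel₀ (ne_of_gt hQpos) e3
  refine ⟨S, Sm, Sv, fun x hx y => ?_⟩
  have hq' : q (x, y) = p (x, y) := by
    rw [hq x y 0, ← hpq x]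
    exact hpu x 0 y
  exact mul_left_cancel₀ (ne_of_gt (hc0.trans (hS x hx y)))
    ((h x y).trans (by rw [hq']))

private lemma outMean_eq_of (d : ℕ) (c : ℝ) (DD : Set (Pt d → ℝ))
    (hcond : Condition3 c DD) (P Q : Pt d → ℝ) (hP : P ∈ DD) (hQ : Q ∈ DD)
    (hm : ∀ x, margX P x = margX Q x)
    (hex : ∃ S : Set (Fin d → ℝ), MeasurableSet S ∧ ENNReal.ofReal c ≤ volume S ∧
      ∀ x ∈ S, ∀ y, P (x, y) = Q (x, y)) : outMean P = outMean Q := by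
  by_contra hne
  rcases hcond P hP Q hQ hne with h | h
  · exact h (funext hm)
  · exact h hex

private lemma ate_key (d : ℕ) (c : ℝ) (hc0 : 0 < c)
    (DD : Set (Pt d → ℝ))
    (hpos : ∀ P ∈ DD, ∀ x, 0 < margX P x)
    (hcond : Condition3 c DD)
    (p₀ p₁ P₀ P₁ q₀ q₁ Q₀ Q₁ : Pt d → ℝ)
    (hR : Realizable (PU c) DD p₀ p₁ P₀ P₁)
    (hR' : Realizable (PU c) DD q₀ q₁ Q₀ Q₁)
    (hC : censoredDensity p₀ p₁ P₀ P₁ = censoredDensity q₀ q₁ Q₀ Q₁) :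
    ate P₀ P₁ = ate Q₀ Q₁ := by
  obtain ⟨⟨-, -, -, -, hmargP, hconsP⟩, hp0U, hp1U, hP0D, hP1D⟩ := hR
  obtain ⟨⟨-, -, -, -, hmargQ, hconsQ⟩, hq0U, hq1U, hQ0D, hQ1D⟩ := hR'
  have h1 : ∀ x y, p₁ (x, y) * P₁ (x, y) = q₁ (x, y) * Q₁ (x, y) := by
    intro x y
    have := congrFun hC (x, y, true)
    simpa [censoredDensity] using this
  have h0 : ∀ x y, p₀ (x, y) * P₀ (x, y) = q₀ (x, y) * Q₀ (x, y) := by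
    intro x y
    have := congrFun hC (x, y, false)
    simpa [censoredDensity] using this
  have hm0 : ∀ x, margX P₀ x = margX Q₀ x := by
    intro x
    rw [← hconsP x, ← hconsQ x]
    simp only [h0, h1]
  have hm1 : ∀ x, margX P₁ x = margX Q₁ x := fun x => by
    rw [← hmargP x, hm0 x, hmargQ x]
  have hO1 : outMean P₁ = outMean Q₁ :=
    outMean_eq_of d c DD hcond P₁ Q₁ hP1D hQ1D hm1
      (dens_eq_on d c hc0 p₁ q₁ P₁ Q₁ hp1U hq1U.2.2.1 h1 hm1 (hpos P₁ hP1D))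
  have hO0 : outMean P₀ = outMean Q₀ :=
    outMean_eq_of d c DD hcond P₀ Q₀ hP0D hQ0D hm0
      (dens_eq_on d c hc0 p₀ q₀ P₀ Q₀ hp0U hq0U.2.2.1 h0 hm0 (hpos P₀ hP0D))
  unfold ate
  rw [hO0, hO1]

/-- Theorem 4.5 (sufficiency, Scenario III): if every density in `𝔻` has everywhere-positive
`X`-marginal and `𝔻` satisfies Condition 3 with constant `c`, then the ATE is identifiable
on studies realizable with respect to `(ℙ_U(c), 𝔻)`. -/
theorem condition3_sufficient_for_ate_identification
    (d : ℕ) (hd : 1 ≤ d) (c : ℝ) (hc : c ∈ Set.Ioo (0 : ℝ) (1 / 2))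
    (DD : Set (Pt d → ℝ)) (hDD : ∀ P ∈ DD, IsDensity P)
    (hpos : ∀ P ∈ DD, ∀ x, 0 < margX P x)
    (hcond : Condition3 c DD) :
    ∃ f : (Samp d → ℝ) → ℝ,
      ∀ p₀ p₁ P₀ P₁ : Pt d → ℝ, Realizable (PU c) DD p₀ p₁ P₀ P₁ →
        f (censoredDensity p₀ p₁ P₀ P₁) = ate P₀ P₁  := by
  classical
  refine ⟨fun C =>
    if h : ∃ q : (Pt d → ℝ) × (Pt d → ℝ) × (Pt d → ℝ) × (Pt d → ℝ),
        Realizable (PU c) DD q.1 q.2.1 q.2.2.1 q.2.2.2 ∧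
          censoredDensity q.1 q.2.1 q.2.2.1 q.2.2.2 = C
    then ate h.choose.2.2.1 h.choose.2.2.2 else 0, ?_⟩
  intro p₀ p₁ P₀ P₁ hreal
  have hex : ∃ q : (Pt d → ℝ) × (Pt d → ℝ) × (Pt d → ℝ) × (Pt d → ℝ),
      Realizable (PU c) DD q.1 q.2.1 q.2.2.1 q.2.2.2 ∧
        censoredDensity q.1 q.2.1 q.2.2.1 q.2.2.2 =
          censoredDensity p₀ p₁ P₀ P₁ :=
    ⟨(p₀, p₁, P₀, P₁), hreal, rfl⟩
  simp only [dif_pos hex]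
  obtain ⟨hr, hc'⟩ := hex.choose_spec
  exact ate_key d c hc.1 DD hpos hcond _ _ _ _ p₀ p₁ P₀ P₁ hr hreal hc'
end

section
/- Theorem 4.5, necessity direction (Scenario III): Fix c ∈ (0,1/2) and a class 𝔻 such that 𝒫_X(x) > 0 for every 𝒫 ∈ 𝔻 and every x ∈ ℝ^d. If 𝔻 does not satisfy Condition 3 with constant c, then for every function f, defined on functions ℝ^d × ℝ × {0,1} → [0,∞) and taking values in ℝ, there exists a density-form observational study D realizable with respect to (ℙ_U(c), 𝔻) such that f(C_D) ≠ τ_D. -/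
open MeasureTheory MvPolynomial

/-- Theorem 4.5 (necessity, Scenario III): if every density in `𝔻` has everywhere-positive
`X`-marginal and `𝔻` does not satisfy Condition 3 with constant `c`, then no map from
censored densities identifies the ATE on all studies realizable with respect to
`(ℙ_U(c), 𝔻)`. -/
theorem condition3_necessary_for_ate_identification
    (d : ℕ) (hd : 1 ≤ d) (c : ℝ) (hc : c ∈ Set.Ioo (0 : ℝ) (1 / 2))
    (DD : Set (Pt d → ℝ)) (hDD : ∀ P ∈ DD, IsDensity P)
    (hpos : ∀ P ∈ DD, ∀ x, 0 < margX P x)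
    (hcond : ¬ Condition3 c DD) :
    ∀ f : (Samp d → ℝ) → ℝ,
      ∃ p₀ p₁ P₀ P₁ : Pt d → ℝ, Realizable (PU c) DD p₀ p₁ P₀ P₁ ∧
        f (censoredDensity p₀ p₁ P₀ P₁) ≠ ate P₀ P₁ := by
  intro f
  unfold Condition3 at hcond
  push_neg at hcond
  obtain ⟨P, hP, Q, hQ, hne, hmarg, S, hSm, hSvol, hPQ⟩ := hcond
  set p₁ : Pt d → ℝ := fun z => S.indicator (fun _ => (1:ℝ)/2) z.1 with hp₁def
  set p₀ : Pt d → ℝ := fun z => 1 - p₁ z with hp₀def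
  have hp₁meas : Measurable p₁ :=
    (measurable_const.indicator hSm).comp measurable_fst
  have hp₀meas : Measurable p₀ := measurable_const.sub hp₁meas
  have hval : ∀ z, p₁ z = 0 ∨ p₁ z = 1/2 := by
    intro z
    by_cases h : z.1 ∈ S
    · right; simp only [hp₁def, Set.indicator_of_mem h]
    · left; simp only [hp₁def, Set.indicator_of_notMem h]
  have hp₁Icc : ∀ z, p₁ z ∈ Set.Icc (0:ℝ) 1 := by
    intro z; rcases hval z with h | h <;> rw [h] <;> constructor <;> norm_num
  have hp₀Icc : ∀ z, p₀ z ∈ Set.Icc (0:ℝ) 1 := by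
    intro z
    rcases hval z with h | h <;>
      simp only [hp₀def, h] <;> constructor <;> norm_num
  have hp₁PU : p₁ ∈ PU (d := d) c := by
    refine ⟨hp₁meas, hp₁Icc, fun x y₁ y₂ => rfl, S, hSm, hSvol, fun x hx y => ?_⟩
    simp only [hp₁def, Set.indicator_of_mem hx]
    exact hc.2
  have hp₀PU : p₀ ∈ PU (d := d) c := by
    refine ⟨hp₀meas, hp₀Icc, fun x y₁ y₂ => rfl, S, hSm, hSvol, fun x hx y => ?_⟩
    simp only [hp₀def, hp₁def, Set.indicator_of_mem hx]
    have := hc.2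
    linarith
  -- validity for any second density with the same marginal
  have hvalid : ∀ R, R ∈ DD → (∀ x, margX P x = margX R x) → ValidStudy p₀ p₁ P R := by
    intro R hR hmR
    refine ⟨⟨hp₀meas, hp₀Icc⟩, ⟨hp₁meas, hp₁Icc⟩, hDD P hP, hDD R hR, hmR, ?_⟩
    intro x
    have h0 : ∀ y : ℝ, p₀ (x, y) = 1 - S.indicator (fun _ => (1:ℝ)/2) x := fun y => rfl
    have h1 : ∀ y : ℝ, p₁ (x, y) = S.indicator (fun _ => (1:ℝ)/2) x := fun y => rfl
    calc (∫ y, p₀ (x, y) * P (x, y)) + ∫ y, p₁ (x, y) * R (x, y)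
        = (∫ y, (1 - S.indicator (fun _ => (1:ℝ)/2) x) * P (x, y))
          + ∫ y, S.indicator (fun _ => (1:ℝ)/2) x * R (x, y) := by
          simp only [h0, h1]
      _ = (1 - S.indicator (fun _ => (1:ℝ)/2) x) * margX P x
          + S.indicator (fun _ => (1:ℝ)/2) x * margX R x := by
          rw [integral_const_mul, integral_const_mul]; rfl
      _ = margX P x := by rw [← hmR x]; ring
  have hcens : censoredDensity p₀ p₁ P P = censoredDensity p₀ p₁ P Q := by
    funext z
    obtain ⟨x, y, t⟩ := z
    cases t
    · rfl
    · show p₁ (x, y) * P (x, y) = p₁ (x, y) * Q (x, y)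
      by_cases hx : x ∈ S
      · rw [hPQ x hx y]
      · have : p₁ (x, y) = 0 := by
          simp only [hp₁def, Set.indicator_of_notMem hx]
        rw [this, zero_mul, zero_mul]
  have hmargQ : ∀ x, margX P x = margX Q x := fun x => congrFun hmarg x
  by_cases hf : f (censoredDensity p₀ p₁ P P) = ate P P
  · refine ⟨p₀, p₁, P, Q, ⟨hvalid Q hQ hmargQ, hp₀PU, hp₁PU, hP, hQ⟩, ?_⟩
    rw [← hcens, hf]
    simp only [ate, sub_self]
    intro h
    exact hne (by linarith)
  · exact ⟨p₀, p₁, P, P, ⟨hvalid P hP (fun x => rfl), hp₀PU, hp₁PU, hP, hP⟩, hf⟩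
end

section
/- Lemma 4.6, part 1 (polynomial log-densities): Let 𝒫, 𝒬 be measurable Lebesgue probability densities on ℝ^d × ℝ with finite outcome means ∬ |y|·𝒫 < ∞, ∬ |y|·𝒬 < ∞, such that 𝒫_X(x) > 0 and 𝒬_X(x) > 0 for all x ∈ ℝ^d, and such that the conditional outcome densities are of log-polynomial form: there are real polynomials f, g in the d+1 variables (x,y) with, for every x ∈ ℝ^d, ∫ e^{f(x,y)} dy < ∞, ∫ e^{g(x,y)} dy < ∞, 𝒫(x,y) = 𝒫_X(x)·e^{f(x,y)} / ∫ e^{f(x,y')} dy' and 𝒬(x,y) = 𝒬_X(x)·e^{g(x,y)} / ∫ e^{g(x,y')} dy' for all y ∈ ℝ. If 𝒫_X = 𝒬_X and there is a measurable set S ⊆ ℝ^d of positive Lebesgue measure with 𝒫(x,y) = 𝒬(x,y) for all (x,y) ∈ S × ℝ, then 𝒫(x,y) = 𝒬(x,y) for all (x,y) ∈ ℝ^d × ℝ; in particular ∬ y·𝒫(x,y) dy dx = ∬ y·𝒬(x,y) dy dx. -/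
open MeasureTheory MvPolynomial

/-!
Dividing out the common marginal, agreement at `x ∈ S` says
`exp f(x, ·) / Z_f(x) = exp g(x, ·) / Z_g(x)`, so `f - g` is constant along every line `{x} × ℝ`
with `x ∈ S`. The polynomial `(f - g)(x, y) - (f - g)(x, 0)` therefore vanishes on `S × ℝ`, a set
of positive measure; since the zero set of a nonzero real polynomial is Lebesgue-null (Fubini and
induction on the number of variables), it is the zero polynomial. So `f - g` depends on `x` alone,
and a normalised density `exp φ / ∫ exp φ` does not see such a shift of its exponent.
-/

theorem MvPolynomial.ae_eval_ne_zero :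
    ∀ {n : ℕ} {p : MvPolynomial (Fin n) ℝ}, p ≠ 0 → ∀ᵐ x : Fin n → ℝ, eval x p ≠ 0
  | 0, p, hp => Filter.Eventually.of_forall fun x hx =>
      hp <| funext fun y => by simpa [Subsingleton.elim y x] using hx
  | n + 1, p, hp => by
    obtain ⟨k, hk⟩ : ∃ k, (finSuccEquiv ℝ n p).coeff k ≠ 0 := by
      by_contra! h
      exact hp <| (finSuccEquiv ℝ n).injective <| Polynomial.ext fun k => by simp [h k]
    -- off the null zero set of the `k`-th coefficient, `y ↦ p (y, s)` is a nonzero polynomial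
    have hslices : ∀ᵐ s : Fin n → ℝ, ∀ᵐ y : ℝ, eval (Fin.cons y s) p ≠ 0 := by
      filter_upwards [ae_eval_ne_zero hk] with s hs
      have hq : Polynomial.map (eval s) (finSuccEquiv ℝ n p) ≠ 0 := fun h0 =>
        hs (by simpa using congr_arg (Polynomial.coeff · k) h0)
      refine measure_mono_null (fun y hy => ?_)
        ((Polynomial.finite_setOfPred_isRoot hq).measure_zero _)
      simpa [eval_eq_eval_mv_eval'] using hy
    have hmeas : MeasurableSet {z : ℝ × (Fin n → ℝ) | eval (Fin.cons z.1 z.2) p ≠ 0} :=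
      (measurableSet_singleton 0).compl.preimage <|
        (continuous_eval p).measurable.comp (by fun_prop)
    have hprod : ∀ᵐ z : ℝ × (Fin n → ℝ), eval (Fin.cons z.1 z.2) p ≠ 0 :=
      (Measure.ae_prod_iff_ae_ae hmeas).2 <| (Measure.ae_ae_comm hmeas).2 hslices
    simpa using (volume_preserving_piFinSuccAbove (fun _ => ℝ) 0).quasiMeasurePreserving.ae hprod

theorem MvPolynomial.eq_zero_of_eval_eq_zero_of_volume_ne_zero {n : ℕ}
    {p : MvPolynomial (Fin n) ℝ} {A : Set (Fin n → ℝ)} (hA : volume A ≠ 0)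
    (h : ∀ x ∈ A, eval x p = 0) : p = 0 := by
  by_contra hp
  exact hA <| measure_mono_null (show A ⊆ {x | eval x p = 0} from h) <| by
    simpa using ae_iff.1 (ae_eval_ne_zero hp)

theorem volume_preimage_init_ne_zero {n : ℕ} {S : Set (Fin n → ℝ)} (hS : volume S ≠ 0) :
    volume (Fin.init ⁻¹' S : Set (Fin (n + 1) → ℝ)) ≠ 0 := by
  have hpre : (Fin.init ⁻¹' S : Set (Fin (n + 1) → ℝ)) =
      MeasurableEquiv.piFinSuccAbove (fun _ => ℝ) (Fin.last n) ⁻¹' (Set.univ ×ˢ S) := by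
    ext v
    simp [MeasurableEquiv.piFinSuccAbove_apply]
  rw [hpre, (volume_preserving_piFinSuccAbove (fun _ => ℝ) (Fin.last n)).measure_preimage_equiv,
    Measure.volume_eq_prod, Measure.prod_prod, Real.volume_univ, ENNReal.top_mul hS]
  exact ENNReal.top_ne_zero

theorem MvPolynomial.eval_snoc_bind₁_snoc_zero {n : ℕ} (p : MvPolynomial (Fin (n + 1)) ℝ)
    (x : Fin n → ℝ) (y : ℝ) :
    eval (Fin.snoc x y) (bind₁ (Fin.snoc (fun i => X i.castSucc) 0) p) =
      eval (Fin.snoc x 0) p := by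
  change eval₂Hom (RingHom.id ℝ) _ _ = _
  rw [eval₂Hom_bind₁]
  have hv : (fun i => eval (Fin.snoc x y)
      ((Fin.snoc (fun i => X i.castSucc) 0 : Fin (n + 1) → MvPolynomial (Fin (n + 1)) ℝ) i)) =
      (Fin.snoc x 0 : Fin (n + 1) → ℝ) := by
    funext i
    refine Fin.lastCases ?_ (fun j => ?_) i <;> simp
  exact congrArg (eval · p) hv

theorem MvPolynomial.eval_snoc_eq_of_volume_ne_zero {n : ℕ}
    {p : MvPolynomial (Fin (n + 1)) ℝ} {S : Set (Fin n → ℝ)} (hS : volume S ≠ 0)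
    (h : ∀ x ∈ S, ∀ y y', eval (Fin.snoc x y) p = eval (Fin.snoc x y') p)
    (x : Fin n → ℝ) (y y' : ℝ) : eval (Fin.snoc x y) p = eval (Fin.snoc x y') p := by
  set q := p - bind₁ (Fin.snoc (fun i => X i.castSucc) 0) p
  have hq : ∀ x y, eval (Fin.snoc x y) q = eval (Fin.snoc x y) p - eval (Fin.snoc x 0) p :=
    fun x y => by rw [map_sub, eval_snoc_bind₁_snoc_zero]
  have hq0 : q = 0 := eq_zero_of_eval_eq_zero_of_volume_ne_zero
    (volume_preimage_init_ne_zero hS) fun v hv => by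
      rw [← Fin.snoc_init_self v, hq, h _ hv _ 0, sub_self]
  have hy := hq x y
  have hy' := hq x y'
  rw [hq0, map_zero] at hy hy'
  linarith

theorem Real.sub_eq_log_sub_log_of_exp_div_eq {a b Za Zb : ℝ} (hZa : 0 < Za) (hZb : 0 < Zb)
    (h : Real.exp a / Za = Real.exp b / Zb) : a - b = Real.log Za - Real.log Zb := by
  rw [← Real.exp_log hZa, ← Real.exp_log hZb, ← Real.exp_sub, ← Real.exp_sub] at h
  linarith [Real.exp_injective h]

theorem exp_div_integral_exp_eq_of_eq_const_add {α : Type*} [MeasurableSpace α]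
    {μ : Measure α} {φ ψ : α → ℝ} (c : ℝ) (h : ∀ t, φ t = c + ψ t) (y : α) :
    Real.exp (φ y) / ∫ t, Real.exp (φ t) ∂μ = Real.exp (ψ y) / ∫ t, Real.exp (ψ t) ∂μ := by
  simp_rw [h, Real.exp_add, integral_const_mul]
  exact mul_div_mul_left _ _ (Real.exp_ne_zero c)

theorem polynomial_log_densities_extrapolate_general
    (d : ℕ) (P Q : Pt d → ℝ)
    (hPX : ∀ x, 0 < margX P x)
    (f g : MvPolynomial (Fin (d + 1)) ℝ)
    (hfInt : ∀ x : Fin d → ℝ,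
      Integrable fun y : ℝ => Real.exp (eval (Fin.snoc x y) f))
    (hgInt : ∀ x : Fin d → ℝ,
      Integrable fun y : ℝ => Real.exp (eval (Fin.snoc x y) g))
    (hPform : ∀ x y, P (x, y) =
      margX P x * Real.exp (eval (Fin.snoc x y) f) /
        ∫ y' : ℝ, Real.exp (eval (Fin.snoc x y') f))
    (hQform : ∀ x y, Q (x, y) =
      margX Q x * Real.exp (eval (Fin.snoc x y) g) /
        ∫ y' : ℝ, Real.exp (eval (Fin.snoc x y') g))
    (hmarg : margX P = margX Q)
    (S : Set (Fin d → ℝ)) (hSpos : 0 < volume S)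
    (hagree : ∀ x ∈ S, ∀ y : ℝ, P (x, y) = Q (x, y)) :
    (∀ z : Pt d, P z = Q z) ∧ outMean P = outMean Q := by
  have hdiff : ∀ x ∈ S, ∀ y, eval (Fin.snoc x y) (f - g) =
      Real.log (∫ y', Real.exp (eval (Fin.snoc x y') f)) -
        Real.log (∫ y', Real.exp (eval (Fin.snoc x y') g)) := by
    intro x hx y
    have h := hagree x hx y
    rw [hPform, hQform, ← hmarg, mul_div_assoc, mul_div_assoc] at h
    simpa using Real.sub_eq_log_sub_log_of_exp_div_eq (integral_exp_pos (hfInt x))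
      (integral_exp_pos (hgInt x)) (mul_left_cancel₀ (hPX x).ne' h)
  have hconst := eval_snoc_eq_of_volume_ne_zero hSpos.ne' fun x hx y y' => by
    rw [hdiff x hx y, hdiff x hx y']
  have hPQ : ∀ z, P z = Q z := by
    rintro ⟨x, y⟩
    rw [hPform, hQform, ← hmarg, mul_div_assoc, mul_div_assoc]
    congr 1
    refine exp_div_integral_exp_eq_of_eq_const_add (φ := fun t => eval (Fin.snoc x t) f)
      (ψ := fun t => eval (Fin.snoc x t) g) (eval (Fin.snoc x 0) (f - g)) (fun t => ?_) y
    linarith [map_sub (eval (Fin.snoc x t)) f g, hconst x t 0]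
  exact ⟨hPQ, by rw [funext hPQ]⟩

/-- Lemma 4.6, part 1 (polynomial log-densities): two densities with log-polynomial
conditional outcome densities, equal everywhere-positive `X`-marginals, that agree on
`S × ℝ` for a set `S` of positive Lebesgue measure, agree everywhere; in particular they
have equal mean outcomes. -/
theorem polynomial_log_densities_extrapolate
    (d : ℕ) (hd : 1 ≤ d) (P Q : Pt d → ℝ)
    (hP : IsDensity P) (hQ : IsDensity Q)
    (hPX : ∀ x, 0 < margX P x) (hQX : ∀ x, 0 < margX Q x)
    (f g : MvPolynomial (Fin (d + 1)) ℝ)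
    (hfInt : ∀ x : Fin d → ℝ,
      Integrable fun y : ℝ => Real.exp (eval (Fin.snoc x y) f))
    (hgInt : ∀ x : Fin d → ℝ,
      Integrable fun y : ℝ => Real.exp (eval (Fin.snoc x y) g))
    (hPform : ∀ x y, P (x, y) =
      margX P x * Real.exp (eval (Fin.snoc x y) f) /
        ∫ y' : ℝ, Real.exp (eval (Fin.snoc x y') f))
    (hQform : ∀ x y, Q (x, y) =
      margX Q x * Real.exp (eval (Fin.snoc x y) g) /
        ∫ y' : ℝ, Real.exp (eval (Fin.snoc x y') g))
    (hmarg : margX P = margX Q)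
    (S : Set (Fin d → ℝ)) (hS : MeasurableSet S) (hSpos : 0 < volume S)
    (hagree : ∀ x ∈ S, ∀ y : ℝ, P (x, y) = Q (x, y)) :
    (∀ z : Pt d, P z = Q z) ∧ outMean P = outMean Q :=
  polynomial_log_densities_extrapolate_general d P Q hPX f g hfInt hgInt hPform hQform hmarg S hSpos
    hagree
end

section
/- Lemma 4.6, part 2 (polynomial expectations): Let 𝒫, 𝒬 be measurable Lebesgue probability densities on ℝ^d × ℝ with finite outcome means ∬ |y|·𝒫 < ∞, ∬ |y|·𝒬 < ∞, such that 𝒫_X(x) > 0 and 𝒬_X(x) > 0 for all x ∈ ℝ^d, that ∫ |y|·𝒫(x,y) dy < ∞ and ∫ |y|·𝒬(x,y) dy < ∞ for every x, and such that the conditional outcome means are polynomial: there are real polynomials f, g in the d variables x with ∫ y·𝒫(x,y) dy = f(x)·𝒫_X(x) and ∫ y·𝒬(x,y) dy = g(x)·𝒬_X(x) for every x ∈ ℝ^d. If 𝒫_X = 𝒬_X and there is a measurable set S ⊆ ℝ^d of positive Lebesgue measure with 𝒫(x,y) = 𝒬(x,y) for all (x,y) ∈ S × ℝ, then ∬ y·𝒫(x,y)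 dy dx = ∬ y·𝒬(x,y) dy dx. -/
open MeasureTheory MvPolynomial

lemma mvpoly_zero_set_null :
    ∀ (n : ℕ) (p : MvPolynomial (Fin n) ℝ), p ≠ 0 →
      volume {x : Fin n → ℝ | eval x p = 0} = 0 := by
  intro n
  induction n with
  | zero =>
    intro p hp
    obtain ⟨c, rfl⟩ := C_surjective (Fin 0) p
    have hc : c ≠ 0 := fun h => hp (by simp [h])
    have : {x : Fin 0 → ℝ | eval x (C c) = 0} = ∅ := by
      ext x; simp [hc]
    rw [this, measure_empty]
  | succ n ih =>
    intro p hp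
    set q := finSuccEquiv ℝ n p with hqdef
    have hq0 : q ≠ 0 := fun h => hp ((map_eq_zero_iff _ (finSuccEquiv ℝ n).injective).mp h)
    have hlead : q.leadingCoeff ≠ 0 := Polynomial.leadingCoeff_ne_zero.mpr hq0
    set e := MeasurableEquiv.piFinSuccAbove (fun _ : Fin (n + 1) => ℝ) 0 with hedef
    have hmp : MeasurePreserving e volume (volume.prod volume) :=
      volume_preserving_piFinSuccAbove (fun _ : Fin (n + 1) => ℝ) 0
    set A : Set (Fin (n + 1) → ℝ) := {x | eval x p = 0} with hAdef
    have hA : MeasurableSet A :=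
      (measurableSet_singleton (0 : ℝ)).preimage (MvPolynomial.continuous_eval p).measurable
    set B : Set ((Fin n → ℝ) × ℝ) := Prod.swap ⁻¹' (e.symm ⁻¹' A) with hBdef
    have hB : MeasurableSet B :=
      (hA.preimage e.symm.measurable).preimage measurable_swap
    have h1 : (volume.prod volume) (e.symm ⁻¹' A) = volume A :=
      (MeasurePreserving.symm e hmp).measure_preimage hA.nullMeasurableSet
    have h2 : (volume.prod volume) B = (volume.prod volume) (e.symm ⁻¹' A) :=
      (Measure.measurePreserving_swap).measure_preimage
        ((hA.preimage e.symm.measurable).nullMeasurableSet)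
    have hslice : ∀ s : Fin n → ℝ, eval s q.leadingCoeff ≠ 0 →
        volume (Prod.mk s ⁻¹' B) = 0 := by
      intro s hs
      have hmapne : Polynomial.map (eval s) q ≠ 0 := by
        intro h
        have hc : (Polynomial.map (eval s) q).coeff q.natDegree
            = eval s q.leadingCoeff := Polynomial.coeff_map _ _
        rw [h, Polynomial.coeff_zero] at hc
        exact hs hc.symm
      have hset : Prod.mk s ⁻¹' B = {y : ℝ | (Polynomial.map (eval s) q).IsRoot y} := by
        ext y
        simp only [hBdef, Set.mem_preimage, Prod.swap_prod_mk, hAdef, Set.mem_setOf_eq,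
          hedef, MeasurableEquiv.piFinSuccAbove_symm_apply, Fin.insertNthEquiv_zero]
        change eval (Fin.cons y s : Fin (n + 1) → ℝ) p = 0 ↔ _
        rw [eval_eq_eval_mv_eval']
        rfl
      rw [hset]
      exact (Polynomial.finite_setOf_isRoot hmapne).measure_zero _
    have haeNZ : ∀ᵐ s : Fin n → ℝ, eval s q.leadingCoeff ≠ 0 := by
      rw [ae_iff]
      simpa using ih _ hlead
    have hae : (fun s => volume (Prod.mk s ⁻¹' B)) =ᵐ[volume] 0 := by
      filter_upwards [haeNZ] with s hs
      simpa using hslice s hs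
    have : (volume.prod volume) B = 0 := (Measure.measure_prod_null hB).mpr hae
    rw [← h1, ← h2, this]

lemma density_snd_integrable {d : ℕ} (P : Pt d → ℝ) (hP : IsDensity P) :
    Integrable (fun z : Pt d => z.2 * P z) := by
  refine hP.2.2.2.2.mono' ((measurable_snd.mul hP.1).aestronglyMeasurable) ?_
  filter_upwards with z
  rw [Real.norm_eq_abs, abs_mul, abs_of_nonneg (hP.2.1 z)]

lemma outMean_eq_iterated {d : ℕ} (P : Pt d → ℝ) (hP : IsDensity P) :
    outMean P = ∫ x : Fin d → ℝ, ∫ y : ℝ, y * P (x, y) := by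
  have intP := density_snd_integrable P hP
  rw [Measure.volume_eq_prod] at intP
  calc outMean P = ∫ z : Pt d, z.2 * P z ∂(volume.prod volume) := by
        rw [outMean, ← Measure.volume_eq_prod]
    _ = ∫ x : Fin d → ℝ, ∫ y : ℝ, y * P (x, y) := integral_prod _ intP

/-- Lemma 4.6, part 2 (polynomial expectations): two densities with polynomial conditional
outcome means, equal everywhere-positive `X`-marginals, that agree on `S × ℝ` for a set `S`
of positive Lebesgue measure, have equal mean outcomes. -/
theorem polynomial_expectations_extrapolate
    (d : ℕ) (hd : 1 ≤ d) (P Q : Pt d → ℝ)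
    (hP : IsDensity P) (hQ : IsDensity Q)
    (hPX : ∀ x, 0 < margX P x) (hQX : ∀ x, 0 < margX Q x)
    (hPint : ∀ x : Fin d → ℝ, Integrable fun y : ℝ => |y| * P (x, y))
    (hQint : ∀ x : Fin d → ℝ, Integrable fun y : ℝ => |y| * Q (x, y))
    (f g : MvPolynomial (Fin d) ℝ)
    (hPmean : ∀ x : Fin d → ℝ, (∫ y : ℝ, y * P (x, y)) = eval x f * margX P x)
    (hQmean : ∀ x : Fin d → ℝ, (∫ y : ℝ, y * Q (x, y)) = eval x g * margX Q x)
    (hmarg : margX P = margX Q)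
    (S : Set (Fin d → ℝ)) (hS : MeasurableSet S) (hSpos : 0 < volume S)
    (hagree : ∀ x ∈ S, ∀ y : ℝ, P (x, y) = Q (x, y)) :
    outMean P = outMean Q := by
  have hfg : f = g := by
    by_contra hne
    have hnull := mvpoly_zero_set_null d (f - g) (sub_ne_zero.mpr hne)
    have hsub : S ⊆ {x : Fin d → ℝ | eval x (f - g) = 0} := by
      intro x hx
      have hPQ : (∫ y : ℝ, y * P (x, y)) = ∫ y : ℝ, y * Q (x, y) := by
        congr 1
        funext y
        rw [hagree x hx y]
      have hkey : eval x f * margX P x = eval x g * margX P x := by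
        rw [hPmean x] at hPQ
        rw [hPQ, hQmean x, hmarg]
      have : eval x f = eval x g := mul_right_cancel₀ (hPX x).ne' hkey
      simp only [Set.mem_setOf_eq, map_sub, sub_eq_zero]
      exact this
    exact absurd (measure_mono_null hsub hnull) hSpos.ne'
  rw [outMean_eq_iterated P hP, outMean_eq_iterated Q hQ]
  simp only [hPmean, hQmean, hfg, hmarg]
end

section
/- Theorem E.1, sufficiency direction (Identifiability of the heterogeneous treatment effect): If the concept classes (ℙ, 𝔻) satisfy Condition 6, and every density in 𝔻 satisfies ∫ |y|·𝒫(x,y) dy < ∞ for every x, then the heterogeneous treatment effect is identifiable from the censored density: there exists a function f, defined on functions ℝ^d × ℝ × {0,1} → [0,∞) and taking values in functions ℝ^d → ℝ, such that for every density-form observational study D realizable with respect to (ℙ, 𝔻) and every x ∈ ℝ^d with (𝒫₀)_X(x) > 0, f(C_D)(x) = τ_D(x). -/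
open MeasureTheory MvPolynomial

/-- Theorem E.1 (sufficiency): if `(ℙ, 𝔻)` satisfy Condition 6 and every density in `𝔻` has
conditionally integrable outcomes, then the heterogeneous treatment effect is identifiable
from the censored density. -/
theorem condition6_sufficient_for_hte_identification
    (d : ℕ) (hd : 1 ≤ d) (PP DD : Set (Pt d → ℝ))
    (hPP : ∀ p ∈ PP, IsPropensity p) (hDD : ∀ P ∈ DD, IsDensity P)
    (hInt : ∀ P ∈ DD, ∀ x : Fin d → ℝ, Integrable fun y : ℝ => |y| * P (x, y))
    (hcond : Condition6 PP DD) :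
    ∃ f : (Samp d → ℝ) → ((Fin d → ℝ) → ℝ),
      ∀ p₀ p₁ P₀ P₁ : Pt d → ℝ, Realizable PP DD p₀ p₁ P₀ P₁ →
        ∀ x : Fin d → ℝ, 0 < margX P₀ x →
          f (censoredDensity p₀ p₁ P₀ P₁) x =
            ((∫ y : ℝ, y * P₁ (x, y)) - ∫ y : ℝ, y * P₀ (x, y)) / margX P₀ x := by
  classical
  have key : ∀ p₀ p₁ P₀ P₁ q₀ q₁ Q₀ Q₁ : Pt d → ℝ,
      Realizable PP DD p₀ p₁ P₀ P₁ → Realizable PP DD q₀ q₁ Q₀ Q₁ →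
      censoredDensity p₀ p₁ P₀ P₁ = censoredDensity q₀ q₁ Q₀ Q₁ →
      P₀ = Q₀ ∧ P₁ = Q₁ := by
    intro p₀ p₁ P₀ P₁ q₀ q₁ Q₀ Q₁ h1 h2 hC
    have hC' : ∀ z, censoredDensity p₀ p₁ P₀ P₁ z = censoredDensity q₀ q₁ Q₀ Q₁ z :=
      fun z => congrFun hC z
    have e0 : ∀ x y, p₀ (x, y) * P₀ (x, y) = q₀ (x, y) * Q₀ (x, y) := by
      intro x y; simpa [censoredDensity] using hC' (x, y, false)
    have e1 : ∀ x y, p₁ (x, y) * P₁ (x, y) = q₁ (x, y) * Q₁ (x, y) := by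
      intro x y; simpa [censoredDensity] using hC' (x, y, true)
    obtain ⟨hv1, hp0, hp1, hP0, hP1⟩ := h1
    obtain ⟨hv2, hq0, hq1, hQ0, hQ1⟩ := h2
    obtain ⟨hp0', hp1', hP0', hP1', hm1, hc1⟩ := hv1
    obtain ⟨hq0', hq1', hQ0', hQ1', hm2, hc2⟩ := hv2
    have i0 : ∀ x, (∫ y, p₀ (x, y) * P₀ (x, y)) = ∫ y, q₀ (x, y) * Q₀ (x, y) := by
      intro x
      have h : (fun y => p₀ (x, y) * P₀ (x, y)) = fun y => q₀ (x, y) * Q₀ (x, y) :=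
        funext (e0 x)
      rw [h]
    have i1 : ∀ x, (∫ y, p₁ (x, y) * P₁ (x, y)) = ∫ y, q₁ (x, y) * Q₁ (x, y) := by
      intro x
      have h : (fun y => p₁ (x, y) * P₁ (x, y)) = fun y => q₁ (x, y) * Q₁ (x, y) :=
        funext (e1 x)
      rw [h]
    have hmarg0 : ∀ x, margX P₀ x = margX Q₀ x := by
      intro x
      rw [← hc1 x, i0 x, i1 x, hc2 x]
    have hv1full : ValidStudy p₀ p₁ P₀ P₁ := ⟨hp0', hp1', hP0', hP1', hm1, hc1⟩
    have hv2full : ValidStudy q₀ q₁ Q₀ Q₁ := ⟨hq0', hq1', hQ0', hQ1', hm2, hc2⟩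
    have hv1' : ValidStudy p₁ p₀ P₁ P₀ :=
      ⟨hp1', hp0', hP1', hP0', fun x => (hm1 x).symm,
        fun x => by rw [add_comm, hc1 x, hm1 x]⟩
    have hv2' : ValidStudy q₁ q₀ Q₁ Q₀ :=
      ⟨hq1', hq0', hQ1', hQ0', fun x => (hm2 x).symm,
        fun x => by rw [add_comm, hc2 x, hm2 x]⟩
    constructor
    · by_cases heq : (p₀, P₀) = (q₀, Q₀)
      · exact (Prod.ext_iff.mp heq).2
      · have comp1 : Compatible PP DD p₀ P₀ := ⟨hp0, hP0, p₁, hp1, P₁, hP1, hv1full⟩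
        have comp2 : Compatible PP DD q₀ Q₀ := ⟨hq0, hQ0, q₁, hq1, Q₁, hQ1, hv2full⟩
        rcases hcond _ _ _ _ comp1 comp2 heq with h | h | ⟨x, y, _, hne⟩
        · exact h
        · exact absurd (funext hmarg0) h
        · exact absurd (e0 x y) hne
    · by_cases heq : (p₁, P₁) = (q₁, Q₁)
      · exact (Prod.ext_iff.mp heq).2
      · have comp1 : Compatible PP DD p₁ P₁ := ⟨hp1, hP1, p₀, hp0, P₀, hP0, hv1'⟩
        have comp2 : Compatible PP DD q₁ Q₁ := ⟨hq1, hQ1, q₀, hq0, Q₀, hQ0, hv2'⟩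
        rcases hcond _ _ _ _ comp1 comp2 heq with h | h | ⟨x, y, _, hne⟩
        · exact h
        · refine absurd (funext fun x => ?_) h
          rw [← hm1 x, hmarg0 x, hm2 x]
        · exact absurd (e1 x y) hne
  refine ⟨fun C x =>
    if h : ∃ q : (Pt d → ℝ) × (Pt d → ℝ) × (Pt d → ℝ) × (Pt d → ℝ),
        Realizable PP DD q.1 q.2.1 q.2.2.1 q.2.2.2 ∧
        censoredDensity q.1 q.2.1 q.2.2.1 q.2.2.2 = C
    then ((∫ y : ℝ, y * h.choose.2.2.2 (x, y)) - ∫ y : ℝ, y * h.choose.2.2.1 (x, y)) /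
      margX h.choose.2.2.1 x
    else 0, ?_⟩
  intro p₀ p₁ P₀ P₁ hreal x hx
  have hex : ∃ q : (Pt d → ℝ) × (Pt d → ℝ) × (Pt d → ℝ) × (Pt d → ℝ),
      Realizable PP DD q.1 q.2.1 q.2.2.1 q.2.2.2 ∧
      censoredDensity q.1 q.2.1 q.2.2.1 q.2.2.2 = censoredDensity p₀ p₁ P₀ P₁ :=
    ⟨(p₀, p₁, P₀, P₁), hreal, rfl⟩
  dsimp only
  rw [dif_pos hex]
  obtain ⟨hre, hCeq⟩ := hex.choose_spec
  obtain ⟨h0, h1⟩ := key _ _ _ _ _ _ _ _ hre hreal hCeq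
  rw [h0, h1]
end
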